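/- Let G be the group with presentation ⟨σ₁, σ₂ ∣ σ₁σ₂σ₁ = σ₂σ₁σ₂, (σ₁σ₂)³ = 1⟩ (the quotient of the braid group of type A₂ by its center) and let φ : G → K be a group homomorphism into a group K such that φ(σ₁) and φ(σ₂²σ₁σ₂⁻²) freely generate a free subgroup of K of rank 2. Then the subgroup of K generated by the two elements φ(σ₁) and φ(σ₂²) is isomorphic to the free product ℤ * ℤ/2ℤ. -/

import Mathlib

/-!
In `B_{A₂}/Z` the braid relation gives `(σ₁σ₂²)² = (σ₁σ₂)³ = 1`. So with `x = φ σ₁` and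
`q = φ (σ₁σ₂²)` the subgroup is `⟨x, q⟩` with `q² = 1`, and conjugating the given free pair by `x`
yields the free pair `(x, q x q⁻¹)`.

For such `x` and `q` the map `ℤ * ℤ/2 → K`, `u ↦ x`, `v ↦ q` is injective. Every element of
`ℤ * ℤ/2` lies in `N` or in `v N`, where `N` is the image of the free group on `u` and `v u v⁻¹`
(the words of even `v`-length). The map is injective on `N` because `(x, q x q⁻¹)` is free, and
nothing in `v N` goes to `1`: otherwise `q x q⁻¹` would be the image of a conjugate of `x`, but
distinct generators of a free group are not conjugate.
-/

/-- Relators of the quotient of the braid group of type `A₂` by its center: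
`σ₁σ₂σ₁σ₂⁻¹σ₁⁻¹σ₂⁻¹` and `(σ₁σ₂)³`. -/
def A2QuotRels : Set (FreeGroup (Fin 2)) :=
  { FreeGroup.of 0 * FreeGroup.of 1 * FreeGroup.of 0 *
      (FreeGroup.of 1)⁻¹ * (FreeGroup.of 0)⁻¹ * (FreeGroup.of 1)⁻¹,
    (FreeGroup.of 0 * FreeGroup.of 1) ^ 3 }

open Monoid (Coprod)
open Subgroup (closure subset_closure)

section

variable {K : Type*} [Group K]

def zmodTwoHom (q : K) (hq : q ^ 2 = 1) : Multiplicative (ZMod 2) →* K :=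
  AddMonoidHom.toMultiplicativeLeft <| ZMod.lift 2 ⟨zmultiplesHom _ (Additive.ofMul q), by
    rw [zmultiplesHom_apply, natCast_zsmul, ← ofMul_pow, hq, ofMul_one]⟩

@[simp]
lemma zmodTwoHom_ofAdd_one (q : K) (hq : q ^ 2 = 1) :
    zmodTwoHom q hq (Multiplicative.ofAdd 1) = q := by
  change Additive.toMul (ZMod.lift 2 _ ((1 : ℤ) : ZMod 2)) = q
  rw [ZMod.lift_coe]
  simp

lemma FreeGroup.not_isConj_of_of {α : Type*} {a b : α} (hab : a ≠ b) :
    ¬ IsConj (of a) (of b) := by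
  classical
  rintro ⟨c, hc⟩
  have := congrArg (lift (Pi.mulSingle a (Multiplicative.ofAdd (1 : ℤ)))) hc.eq
  simp [hab.symm] at this

lemma FreeGroup.injective_lift_conj_snd {a b : K} (h : Function.Injective (lift ![a, b])) :
    Function.Injective (lift ![a, a * b * a⁻¹]) := by
  have : lift ![a, a * b * a⁻¹] = (MulAut.conj a).toMonoidHom.comp (lift ![a, b]) := by
    ext i; fin_cases i <;> simp
  rw [this]
  exact (MulAut.conj a).injective.comp h

lemma Subgroup.closure_pair_mul_right (a b : K) : closure {a, a * b} = closure {a, b} := by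
  have ha : ∀ {s : Set K}, a ∈ s → a ∈ closure s := fun h ↦ subset_closure h
  apply le_antisymm <;> rw [closure_le, Set.insert_subset_iff, Set.singleton_subset_iff]
  · exact ⟨ha (by simp), mul_mem (ha (by simp)) (subset_closure (by simp))⟩
  · refine ⟨ha (by simp), ?_⟩
    simpa using mul_mem (inv_mem (ha (by simp)))
      (subset_closure (by simp) : a * b ∈ closure {a, a * b})

end

namespace IntCoprodZModTwo

local notation "C" => Coprod (Multiplicative ℤ) (Multiplicative (ZMod 2))

def u : C := Coprod.inl (.ofAdd 1)

def v : C := Coprod.inr (.ofAdd 1)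

lemma v_mul_v : v * v = 1 := by
  rw [v, ← map_mul, ← ofAdd_add]
  simp [show (1 + 1 : ZMod 2) = 0 from rfl]

lemma v_inv : v⁻¹ = v := inv_eq_of_mul_eq_one_right v_mul_v

@[simp]
lemma v_mul_v_mul (c : C) : v * (v * c) = c := by rw [← mul_assoc, v_mul_v, one_mul]

def evenHom : FreeGroup (Fin 2) →* C := FreeGroup.lift ![u, v * u * v⁻¹]

lemma conj_v_mem_range {n : C} (hn : n ∈ evenHom.range) : v * n * v⁻¹ ∈ evenHom.range := by
  have swap : (MulAut.conj v).toMonoidHom.comp evenHom =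
      evenHom.comp (FreeGroup.lift ![FreeGroup.of 1, FreeGroup.of 0]) := by
    ext i; fin_cases i
    · simp [evenHom]
    · simp [evenHom, v_inv, mul_assoc, v_mul_v]
  obtain ⟨m, rfl⟩ := hn
  exact ⟨_, (DFunLike.congr_fun swap m).symm⟩

lemma u_mem_range : u ∈ evenHom.range := ⟨FreeGroup.of 0, by simp [evenHom]⟩

lemma mem_range_or_v_mul_mem_range (c : C) : c ∈ evenHom.range ∨ v * c ∈ evenHom.range := by
  induction c using Coprod.induction_on with
  | inl m =>
    left
    have : Coprod.inl m = u ^ m.toAdd := by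
      rw [u, ← map_zpow, ← ofAdd_zsmul, smul_eq_mul, mul_one, ofAdd_toAdd]
    exact this ▸ zpow_mem u_mem_range _
  | inr n =>
    obtain ⟨k, rfl⟩ := Multiplicative.ofAdd.surjective n
    fin_cases k
    · left
      show Coprod.inr 1 ∈ evenHom.range
      simp
    · right; exact v_mul_v ▸ one_mem _
  | mul c₁ c₂ h₁ h₂ =>
    rcases h₁ with h₁ | h₁ <;> rcases h₂ with h₂ | h₂
    · exact .inl (mul_mem h₁ h₂)
    · right
      simpa [mul_assoc] using mul_mem (conj_v_mem_range h₁) h₂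
    · right
      simpa [mul_assoc] using mul_mem h₁ h₂
    · left
      have : c₁ * c₂ = v * (v * c₁) * v⁻¹ * (v * c₂) := by
        simp [v_inv, mul_assoc]
      exact this ▸ mul_mem (conj_v_mem_range h₁) h₂

lemma closure_u_v_eq_top : closure {u, v} = ⊤ := by
  have hv : v ∈ closure {u, v} := subset_closure (by simp)
  have hrange : evenHom.range ≤ closure {u, v} := by
    refine FreeGroup.range_lift_le ?_
    rintro _ ⟨i, rfl⟩
    fin_cases i
    · exact subset_closure (by simp)
    · exact mul_mem (mul_mem hv (subset_closure (by simp))) (inv_mem hv)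
  refine eq_top_iff.2 fun c _ ↦ ?_
  rcases mem_range_or_v_mul_mem_range c with h | h
  · exact hrange h
  · simpa using mul_mem (inv_mem hv) (hrange h)

variable {K : Type*} [Group K] {x q : K}

@[simp]
lemma lift_u (hq : q ^ 2 = 1) : Coprod.lift (zpowersHom K x) (zmodTwoHom q hq) u = x := by simp [u]

@[simp]
lemma lift_v (hq : q ^ 2 = 1) : Coprod.lift (zpowersHom K x) (zmodTwoHom q hq) v = q := by simp [v]

lemma lift_comp_evenHom (hq : q ^ 2 = 1) :
    (Coprod.lift (zpowersHom K x) (zmodTwoHom q hq)).comp evenHom =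
      FreeGroup.lift ![x, q * x * q⁻¹] := by
  ext i; fin_cases i <;> simp [evenHom]

lemma injective_lift (hq : q ^ 2 = 1)
    (hfree : Function.Injective (FreeGroup.lift ![x, q * x * q⁻¹])) :
    Function.Injective (Coprod.lift (zpowersHom K x) (zmodTwoHom q hq)) := by
  have hcomp := DFunLike.congr_fun (lift_comp_evenHom (x := x) hq)
  simp only [MonoidHom.comp_apply] at hcomp
  refine (injective_iff_map_eq_one _).2 fun c hc ↦ ?_
  rcases mem_range_or_v_mul_mem_range c with ⟨m, rfl⟩ | ⟨m, hm⟩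
  · rw [hcomp] at hc
    rw [hfree (hc.trans (map_one _).symm), map_one]
  · have hm' : FreeGroup.lift ![x, q * x * q⁻¹] m = q := by
      rw [← hcomp, hm, map_mul, hc, lift_v, mul_one]
    have hconj : IsConj (FreeGroup.of (0 : Fin 2)) (FreeGroup.of 1) :=
      isConj_iff.2 ⟨m, hfree (by simp [hm'])⟩
    exact absurd hconj (FreeGroup.not_isConj_of_of (by decide))

lemma range_lift (hq : q ^ 2 = 1) :
    (Coprod.lift (zpowersHom K x) (zmodTwoHom q hq)).range = closure {x, q} := by
  rw [MonoidHom.range_eq_map, ← closure_u_v_eq_top, MonoidHom.map_closure, Set.image_pair, lift_u,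
    lift_v]

theorem nonempty_closure_pair_mulEquiv (hq : q ^ 2 = 1)
    (hfree : Function.Injective (FreeGroup.lift ![x, q * x * q⁻¹])) :
    Nonempty (closure {x, q} ≃* C) :=
  ⟨(MulEquiv.subgroupCongr (range_lift hq).symm).trans
    (MonoidHom.ofInjective (injective_lift hq hfree)).symm⟩

end IntCoprodZModTwo

lemma A2QuotRels.of_zero_mul_of_one_sq_sq :
    (PresentedGroup.of 0 * PresentedGroup.of 1 ^ 2 : PresentedGroup A2QuotRels) ^ 2 = 1 := by
  set s : PresentedGroup A2QuotRels := PresentedGroup.of 0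
  set t : PresentedGroup A2QuotRels := PresentedGroup.of 1
  have braid : s * t * s * t⁻¹ * s⁻¹ * t⁻¹ = 1 := by
    have := PresentedGroup.one_of_mem (Set.mem_insert _ _ : _ ∈ A2QuotRels)
    simp only [map_mul, map_inv] at this
    exact this
  have cube : (s * t) ^ 3 = 1 := by
    have := PresentedGroup.one_of_mem (Set.mem_insert_of_mem _ rfl : _ ∈ A2QuotRels)
    simp only [map_mul, map_pow] at this
    exact this
  clear_value s t
  have braid' : s * t * s = t * s * t := by
    rw [← mul_inv_eq_one, ← braid]; group
  calc (s * t ^ 2) ^ 2 = s * t * (t * s * t) * t := by simp only [sq, mul_assoc]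
    _ = (s * t) ^ 3 := by rw [← braid']; simp only [pow_succ, pow_zero, one_mul, mul_assoc]
    _ = 1 := cube

open Monoid in
theorem stmt_7 {K : Type*} [Group K] (φ : PresentedGroup A2QuotRels →* K)
    (hfree : Function.Injective (FreeGroup.lift
      (![φ (PresentedGroup.of 0),
         φ (PresentedGroup.of 1 ^ 2 * PresentedGroup.of 0 * (PresentedGroup.of 1 ^ 2)⁻¹)] :
        Fin 2 → K))) :
    Nonempty
      ((Subgroup.closure {φ (PresentedGroup.of 0), φ (PresentedGroup.of 1 ^ 2)} : Subgroup K) ≃*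
        Coprod (Multiplicative ℤ) (Multiplicative (ZMod 2))) := by
  set x := φ (PresentedGroup.of 0)
  set y := φ (PresentedGroup.of 1 ^ 2)
  have hq : (x * y) ^ 2 = 1 := by
    simpa [x, y] using congrArg φ A2QuotRels.of_zero_mul_of_one_sq_sq
  have hfree' : Function.Injective (FreeGroup.lift ![x, x * y * x * (x * y)⁻¹]) := by
    convert FreeGroup.injective_lift_conj_snd hfree using 4
    simp only [map_mul, map_inv, mul_inv_rev, mul_assoc]
    rfl
  rw [← Subgroup.closure_pair_mul_right]
  exact IntCoprodZModTwo.nonempty_closure_pair_mulEquiv hq hfree'
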